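/- arXiv:1209.6626 — 2 statements merged into one kernel-verified Lean document; each statement's English description precedes it below -/
import Mathlib

section
/- Let a be an odd integer and i a positive integer. Let b = a mod 2^i and a_H = (a div 2^i) mod 2^i, and let r be an integer with 0 ≤ r < 2^i and b·r ≡ 1 (mod 2^i). Define t ≡ -(((r·b) div 2^i) + ((r·a_H) mod 2^i))·r (mod 2^i). Then s = r + t·2^i satisfies a·s ≡ 1 (mod 2^{2i}). -/
theorem arazi_qi_formula (a : ℤ) (ha : Odd a) (i : ℕ) (hi : 0 < i)
    (r t : ℤ) (hr0 : 0 ≤ r) (hr1 : r < 2 ^ i)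
    (hb : (a % 2 ^ i) * r ≡ 1 [ZMOD (2 : ℤ) ^ i])
    (ht : t ≡ -(((r * (a % 2 ^ i)) / 2 ^ i) + ((r * ((a / 2 ^ i) % 2 ^ i)) % 2 ^ i)) * r
          [ZMOD (2 : ℤ) ^ i]) :
    a * (r + t * 2 ^ i) ≡ 1 [ZMOD (2 : ℤ) ^ (2 * i)] := by
  set N : ℤ := (2 : ℤ) ^ i with hNdef
  have hN2 : (2 : ℤ) ≤ N := le_self_pow₀ (by norm_num) hi.ne'
  have hN1 : 1 < N := by linarith
  set b := a % N with hbdef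
  set aH := (a / N) % N with hahdef
  set q := r * b / N with hqdef
  set u := r * aH % N with hudef
  set v := r * aH / N with hvdef
  set k := a / N / N with hkdef
  -- E1 : r * b = N * q + 1
  have hE1 : r * b = N * q + 1 := by
    have h1 : (b * r) % N = 1 % N := hb
    have h2 : 1 % N = 1 := Int.emod_eq_of_lt (by norm_num) hN1
    have h3 : N * q + r * b % N = r * b := Int.mul_ediv_add_emod (r * b) N
    rw [mul_comm b r] at h1
    linarith
  -- E2 : r * aH = N * v + u
  have hE2 : r * aH = N * v + u := (Int.mul_ediv_add_emod (r * aH) N).symm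
  -- E3 : a = N * N * k + N * aH + b
  have hE3 : a = N * N * k + N * aH + b := by
    have h1 : N * (a / N) + a % N = a := Int.mul_ediv_add_emod a N
    have h2 : N * k + (a / N) % N = a / N := Int.mul_ediv_add_emod (a / N) N
    rw [← h1, ← h2]
    ring
  -- E4
  obtain ⟨m, hm⟩ := Int.ModEq.dvd ht
  have hE4 : t = -(q + u) * r - N * m := by linarith
  have hpow : (2 : ℤ) ^ (2 * i) = N * N := by
    rw [hNdef, ← pow_add]; ring_nf
  rw [Int.modEq_iff_dvd, hpow]
  refine ⟨-(v - b * m - q * (q + u) + k * r + N * k * t + aH * t), ?_⟩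
  linear_combination (-(r + t * N)) * hE3 + (-(N * b)) * hE4 +
    (-(1 - N * (q + u))) * hE1 + (-N) * hE2
end

section
/- Let a be an odd integer, written as a = 2^s·t + 1 with s ≥ 1 and t any integer, and for n ≥ 1 define U_n = (2 - a)·∏_{i=1}^{n-1} (1 + (a - 1)^{2^i}). Then a·U_n ≡ 1 (mod 2^{s·2^n}). In particular, if s·2^n ≥ m, then U_n mod 2^m is the inverse of a modulo 2^m. -/
lemma telescope_prod (x : ℤ) : ∀ n : ℕ, 1 ≤ n →
    (1 - x ^ 2) * ∏ i ∈ Finset.Icc 1 (n - 1), (1 + x ^ (2 ^ i)) = 1 - x ^ (2 ^ n) := by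
  intro n
  induction n with
  | zero => omega
  | succ k ih =>
    intro _
    cases k with
    | zero => simp
    | succ j =>
      have h1 : 1 ≤ j + 1 := by omega
      have hprod : ∏ i ∈ Finset.Icc 1 (j + 1), (1 + x ^ (2 ^ i))
          = (∏ i ∈ Finset.Icc 1 j, (1 + x ^ (2 ^ i))) * (1 + x ^ (2 ^ (j + 1))) :=
        Finset.prod_Icc_succ_top h1 _
      have ihj := ih h1
      simp only [Nat.add_sub_cancel] at ihj ⊢
      rw [hprod, ← mul_assoc, ihj]
      have : x ^ 2 ^ (j + 1 + 1) = (x ^ 2 ^ (j + 1)) ^ 2 := by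
        rw [← pow_mul, pow_succ]
      rw [this]; ring

theorem explicit_formula_two_power (a t : ℤ) (s : ℕ) (ha : Odd a)
    (hs : 1 ≤ s) (hat : a = 2 ^ s * t + 1) :
    ∀ n : ℕ, 1 ≤ n →
      a * ((2 - a) * ∏ i ∈ Finset.Icc 1 (n - 1), (1 + (a - 1) ^ (2 ^ i)))
        ≡ 1 [ZMOD (2 : ℤ) ^ (s * 2 ^ n)] ∧
      ∀ m : ℕ, m ≤ s * 2 ^ n →
        a * (((2 - a) * ∏ i ∈ Finset.Icc 1 (n - 1), (1 + (a - 1) ^ (2 ^ i))) % 2 ^ m)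
          ≡ 1 [ZMOD (2 : ℤ) ^ m] := by
  intro n hn
  have key : a * ((2 - a) * ∏ i ∈ Finset.Icc 1 (n - 1), (1 + (a - 1) ^ (2 ^ i)))
      = 1 - (a - 1) ^ (2 ^ n) := by
    have h := telescope_prod (a - 1) n hn
    calc a * ((2 - a) * ∏ i ∈ Finset.Icc 1 (n - 1), (1 + (a - 1) ^ (2 ^ i)))
        = (1 - (a - 1) ^ 2) * ∏ i ∈ Finset.Icc 1 (n - 1), (1 + (a - 1) ^ (2 ^ i)) := by
          rw [← mul_assoc]; ring_nf
      _ = 1 - (a - 1) ^ (2 ^ n) := h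
  have hdvd : (2 : ℤ) ^ (s * 2 ^ n) ∣ (a - 1) ^ (2 ^ n) := by
    have ha1 : a - 1 = 2 ^ s * t := by rw [hat]; ring
    rw [ha1, mul_pow, ← pow_mul]
    exact Dvd.dvd.mul_right dvd_rfl _
  have hmod : a * ((2 - a) * ∏ i ∈ Finset.Icc 1 (n - 1), (1 + (a - 1) ^ (2 ^ i)))
      ≡ 1 [ZMOD (2 : ℤ) ^ (s * 2 ^ n)] := by
    rw [key]
    exact (Int.modEq_iff_dvd.mpr (by simpa using hdvd)).symm.symm
  refine ⟨hmod, fun m hm => ?_⟩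
  have h2 : (2 : ℤ) ^ m ∣ (2 : ℤ) ^ (s * 2 ^ n) := pow_dvd_pow 2 hm
  have hmodm := hmod.of_dvd h2
  have hrem : ((2 - a) * ∏ i ∈ Finset.Icc 1 (n - 1), (1 + (a - 1) ^ (2 ^ i))) % 2 ^ m
      ≡ (2 - a) * ∏ i ∈ Finset.Icc 1 (n - 1), (1 + (a - 1) ^ (2 ^ i)) [ZMOD (2 : ℤ) ^ m] :=
    Int.emod_emod_of_dvd _ dvd_rfl
  exact (hrem.mul_left a).trans hmodm
end
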